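/- arXiv:1909.03487 — 7 statements merged into one kernel-verified Lean document; each statement's English description precedes it below -/
import Mathlib

section
/- Let f : [a,b] → ℝ be Lipschitz, N ⊆ [a,b] a closed set of Lebesgue measure zero, and suppose (a,b) \ N is the union of countably many disjoint open intervals (aₙ, bₙ). Then f(b) − f(a) = ∑ₙ (f(bₙ) − f(aₙ)). -/
/-!
A Lipschitz function is absolutely continuous, so `f b - f a` and each `f (d n) - f (c n)` are
integrals of `deriv f`. Since `N` is null, `(a, b)` is almost everywhere the disjoint union of the
intervals `(c n, d n)`, and countable additivity of the integral gives the sum.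
-/

open MeasureTheory Set

namespace AbsolutelyContinuousOnInterval

theorem setIntegral_Ioo_deriv_eq_sub {f : ℝ → ℝ} {a b : ℝ}
    (hf : AbsolutelyContinuousOnInterval f a b) (hab : a ≤ b) :
    ∫ x in Ioo a b, deriv f x = f b - f a := by
  rw [← integral_Ioc_eq_integral_Ioo, ← intervalIntegral.integral_of_le hab,
    hf.integral_deriv_eq_sub]

theorem hasSum_sub_of_Ioo_sdiff_eq_iUnion {ι : Type*} [Countable ι] {f : ℝ → ℝ} {a b : ℝ}
    (hf : AbsolutelyContinuousOnInterval f a b) (hab : a ≤ b) {N : Set ℝ} (hN : volume N = 0)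
    {c d : ι → ℝ} (hcd : ∀ i, c i ≤ d i)
    (hdisj : Pairwise (Function.onFun Disjoint fun i => Ioo (c i) (d i)))
    (hunion : Ioo a b \ N = ⋃ i, Ioo (c i) (d i)) :
    HasSum (fun i => f (d i) - f (c i)) (f b - f a) := by
  have hsub : (⋃ i, Ioo (c i) (d i)) ⊆ Ioo a b := hunion ▸ sdiff_subset
  have hpiece : ∀ i, ∫ x in Ioo (c i) (d i), deriv f x = f (d i) - f (c i) := by
    intro i
    rcases (hcd i).eq_or_lt with heq | hlt
    · simp [heq]
    obtain ⟨hac, hdb⟩ := (Ioo_subset_Ioo_iff hlt).1 ((subset_iUnion _ i).trans hsub)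
    refine (hf.mono ?_).setIntegral_Ioo_deriv_eq_sub hlt.le
    rw [uIcc_of_le hlt.le, uIcc_of_le hab]
    exact Icc_subset_Icc hac hdb
  have hint : IntegrableOn (deriv f) (⋃ i, Ioo (c i) (d i)) :=
    ((intervalIntegrable_iff_integrableOn_Ioo_of_le hab).1 hf.intervalIntegrable_deriv).mono_set
      hsub
  have hae : (⋃ i, Ioo (c i) (d i) : Set ℝ) =ᵐ[volume] Ioo a b :=
    hunion ▸ sdiff_null_ae_eq_self hN
  have hsum := hasSum_integral_iUnion (fun i => measurableSet_Ioo) hdisj hint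
  rwa [setIntegral_congr_set hae, hf.setIntegral_Ioo_deriv_eq_sub hab, funext hpiece] at hsum

end AbsolutelyContinuousOnInterval

theorem stmt0_general (a b : ℝ) (hab : a ≤ b) (f : ℝ → ℝ) (K : NNReal)
    (hf : LipschitzOnWith K f (Set.Icc a b))
    (N : Set ℝ)
    (hNnull : volume N = 0)
    (c d : ℕ → ℝ) (hcd : ∀ n, c n ≤ d n)
    (hdisj : Pairwise (Function.onFun Disjoint fun n => Set.Ioo (c n) (d n)))
    (hunion : Set.Ioo a b \ N = ⋃ n, Set.Ioo (c n) (d n)) :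
    HasSum (fun n => f (d n) - f (c n)) (f b - f a) := by
  have hf' : LipschitzOnWith K f (uIcc a b) := by rwa [uIcc_of_le hab]
  exact hf'.absolutelyContinuousOnInterval.hasSum_sub_of_Ioo_sdiff_eq_iUnion hab hNnull hcd
    hdisj hunion

/-- If `f` is Lipschitz on `[a,b]`, `N ⊆ [a,b]` is closed and Lebesgue null, and
`(a,b) \ N` is the union of countably many pairwise disjoint open intervals `(c n, d n)`,
then `f b - f a = ∑ n, (f (d n) - f (c n))`. -/
theorem stmt0 (a b : ℝ) (hab : a ≤ b) (f : ℝ → ℝ) (K : NNReal)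
    (hf : LipschitzOnWith K f (Set.Icc a b))
    (N : Set ℝ) (hNsub : N ⊆ Set.Icc a b) (hNclosed : IsClosed N)
    (hNnull : volume N = 0)
    (c d : ℕ → ℝ) (hcd : ∀ n, c n ≤ d n)
    (hsub : ∀ n, Set.Ioo (c n) (d n) ⊆ Set.Icc a b)
    (hdisj : Pairwise (Function.onFun Disjoint fun n => Set.Ioo (c n) (d n)))
    (hunion : Set.Ioo a b \ N = ⋃ n, Set.Ioo (c n) (d n)) :
    HasSum (fun n => f (d n) - f (c n)) (f b - f a) :=
  stmt0_general a b hab f K hf N hNnull c d hcd hdisj hunion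
end

section
/- Let γ : [0,1] → ℝ^d be 1-Lipschitz, and suppose γ is θ-flat in direction u around an interval R₀ (i.e. ‖γ(t₁) − γ(t₂) − (t₁ − t₂)u‖ ≤ θ|t₁ − t₂| whenever dist(tᵢ, R₀) < |R₀|), with u a unit vector and 0 < θ < 1/3. Let (a,b) ⊆ R₀, q ∈ R₀ \ (a,b), r ∈ ℝ, τ > 0, and let h : [0,1]^d → ℝ satisfy h(x) = r + τ‖x − γ(q)‖ for x ∈ {γ(a), γ(b)}. If q ≤ a ≤ b then |h(γ(b)) − h(γ(a)) − τ(b − a)| ≤ 3θτ(b − a); if a ≤ b ≤ q then |h(γ(b)) − h(γ(a)) − τ(a − b)| ≤ 3θτ(b − a). -/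
open RealInnerProductSpace in
lemma key_cone {E : Type*} [NormedAddCommGroup E] [InnerProductSpace ℝ E]
    (u : E) (hu : ‖u‖ = 1) (θ s t : ℝ) (hθ0 : 0 ≤ θ) (hθ1 : θ ≤ 1)
    (hs : 0 ≤ s) (ht : 0 ≤ t)
    (X Y : E) (hX : ‖X - s • u‖ ≤ θ * s) (hY : ‖Y - t • u‖ ≤ θ * t) :
    |‖X + Y‖ - ‖X‖ - t| ≤ 3 * θ * t := by
  have hYn : ‖Y‖ ≤ t + θ * t := by
    have hYe : t • u + (Y - t • u) = Y := by abel
    calc ‖Y‖ = ‖t • u + (Y - t • u)‖ := by rw [hYe]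
    _ ≤ ‖t • u‖ + ‖Y - t • u‖ := norm_add_le _ _
    _ ≤ t + θ * t := by
        rw [norm_smul, hu, Real.norm_eq_abs, abs_of_nonneg ht]
        linarith
  have hupper : ‖X + Y‖ - ‖X‖ - t ≤ 3 * θ * t := by
    have := norm_add_le X Y
    nlinarith
  have hlower : -(3 * θ * t) ≤ ‖X + Y‖ - ‖X‖ - t := by
    by_cases hX0 : X = 0
    · subst hX0
      simp only [norm_zero, zero_add] at *
      have : ‖t • u‖ - ‖Y‖ ≤ ‖Y - t • u‖ := by
        have := norm_sub_norm_le (t • u) Y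
        rwa [show t • u - Y = -(Y - t • u) by abel, norm_neg] at this
      rw [norm_smul, hu, Real.norm_eq_abs, abs_of_nonneg ht] at this
      nlinarith
    · have hXpos : 0 < ‖X‖ := norm_pos_iff.mpr hX0
      have hXn : ‖X‖ ≤ s + θ * s := by
        have hXe : s • u + (X - s • u) = X := by abel
        calc ‖X‖ = ‖s • u + (X - s • u)‖ := by rw [hXe]
        _ ≤ ‖s • u‖ + ‖X - s • u‖ := norm_add_le _ _
        _ ≤ s + θ * s := by
            rw [norm_smul, hu, Real.norm_eq_abs, abs_of_nonneg hs]
            linarith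
      have ip1 : s - θ * s ≤ ⟪u, X⟫ := by
        have h1 : ⟪u, X - s • u⟫ = ⟪u, X⟫ - s := by
          rw [inner_sub_right, real_inner_smul_right, real_inner_self_eq_norm_sq, hu]
          ring
        have h2 : |⟪u, X - s • u⟫| ≤ θ * s := by
          calc |⟪u, X - s • u⟫| ≤ ‖u‖ * ‖X - s • u‖ := abs_real_inner_le_norm _ _
          _ ≤ θ * s := by rw [hu]; linarith
        rw [h1] at h2
        have := abs_le.mp h2
        linarith [this.1]
      have ip2 : t * ⟪u, X⟫ - θ * t * ‖X‖ ≤ ⟪X, Y⟫ := by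
        have h1 : ⟪X, Y - t • u⟫ = ⟪X, Y⟫ - t * ⟪u, X⟫ := by
          rw [inner_sub_right, real_inner_smul_right, real_inner_comm X u]
        have h2 : |⟪X, Y - t • u⟫| ≤ ‖X‖ * (θ * t) := by
          calc |⟪X, Y - t • u⟫| ≤ ‖X‖ * ‖Y - t • u‖ := abs_real_inner_le_norm _ _
          _ ≤ ‖X‖ * (θ * t) := mul_le_mul_of_nonneg_left hY (norm_nonneg X)
        rw [h1] at h2
        have := abs_le.mp h2
        linarith [this.1]
      have ip3 : ⟪X, X + Y⟫ ≤ ‖X‖ * ‖X + Y‖ := real_inner_le_norm _ _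
      have ip4 : ⟪X, X + Y⟫ = ‖X‖ ^ 2 + ⟪X, Y⟫ := by
        rw [inner_add_right, real_inner_self_eq_norm_sq]
      rw [ip4] at ip3
      have main : t * ‖X‖ - 3 * θ * t * ‖X‖ ≤ ⟪X, Y⟫ := by
        have e1 : t * (s - θ * s) - θ * t * ‖X‖ ≤ ⟪X, Y⟫ := by
          have := mul_le_mul_of_nonneg_left ip1 ht
          linarith
        rcases le_or_gt (2 * θ) 1 with hc | hc
        · nlinarith [mul_le_mul_of_nonneg_left hXn
              (mul_nonneg (by linarith : (0:ℝ) ≤ 1 - 2 * θ) ht),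
            mul_nonneg (mul_nonneg hθ0 hθ0) (mul_nonneg ht hs)]
        · nlinarith [mul_nonneg (mul_nonneg ht hs) (by linarith : (0:ℝ) ≤ 1 - θ),
            mul_nonneg (mul_nonneg (by linarith : (0:ℝ) ≤ 2 * θ - 1) ht) (norm_nonneg X)]
      have key : ‖X‖ * (‖X‖ + t - 3 * θ * t) ≤ ‖X‖ * ‖X + Y‖ := by nlinarith
      have := le_of_mul_le_mul_left key hXpos
      linarith
  exact abs_le.mpr ⟨hlower, hupper⟩

/-- Lemma on the increase of conical functions along a flat piece of a `1`-Lipschitz curve. -/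
theorem stmt4 (d : ℕ) (γ : ℝ → EuclideanSpace ℝ (Fin d))
    (hγ : LipschitzOnWith 1 γ (Set.Icc 0 1))
    (u : EuclideanSpace ℝ (Fin d)) (hu : ‖u‖ = 1)
    (θ : ℝ) (hθ0 : 0 < θ) (hθ : θ < 1/3)
    (A B : ℝ) (hAB : A < B) (hR₀ : Set.Icc A B ⊆ Set.Icc 0 1)
    (hflat : ∀ t₁ ∈ Set.Icc (0:ℝ) 1, ∀ t₂ ∈ Set.Icc (0:ℝ) 1,
      Metric.infDist t₁ (Set.Icc A B) < B - A → Metric.infDist t₂ (Set.Icc A B) < B - A →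
      ‖γ t₁ - γ t₂ - (t₁ - t₂) • u‖ ≤ θ * |t₁ - t₂|)
    (a b q r τ : ℝ) (hab : a ≤ b) (ha : a ∈ Set.Icc A B) (hb : b ∈ Set.Icc A B)
    (hq : q ∈ Set.Icc A B) (hqout : q ∉ Set.Ioo a b) (hτ : 0 < τ)
    (h : EuclideanSpace ℝ (Fin d) → ℝ)
    (hha : h (γ a) = r + τ * ‖γ a - γ q‖) (hhb : h (γ b) = r + τ * ‖γ b - γ q‖) :
    (q ≤ a → |h (γ b) - h (γ a) - τ * (b - a)| ≤ 3 * θ * τ * (b - a)) ∧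
    (b ≤ q → |h (γ b) - h (γ a) - τ * (a - b)| ≤ 3 * θ * τ * (b - a)) := by
  have hflat' : ∀ t₁ ∈ Set.Icc A B, ∀ t₂ ∈ Set.Icc A B,
      ‖γ t₁ - γ t₂ - (t₁ - t₂) • u‖ ≤ θ * |t₁ - t₂| := by
    intro t₁ ht₁ t₂ ht₂
    exact hflat t₁ (hR₀ ht₁) t₂ (hR₀ ht₂)
      (by rw [Metric.infDist_zero_of_mem ht₁]; linarith)
      (by rw [Metric.infDist_zero_of_mem ht₂]; linarith)
  constructor
  · intro hqa
    have hX : ‖(γ a - γ q) - (a - q) • u‖ ≤ θ * (a - q) := by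
      have := hflat' a ha q hq
      rwa [abs_of_nonneg (by linarith)] at this
    have hY : ‖(γ b - γ a) - (b - a) • u‖ ≤ θ * (b - a) := by
      have := hflat' b hb a ha
      rwa [abs_of_nonneg (by linarith)] at this
    have hk := key_cone u hu θ (a - q) (b - a) hθ0.le (by linarith) (by linarith)
      (by linarith) (γ a - γ q) (γ b - γ a) hX hY
    have heq : (γ a - γ q) + (γ b - γ a) = γ b - γ q := by abel
    rw [heq] at hk
    have : h (γ b) - h (γ a) - τ * (b - a) = τ * (‖γ b - γ q‖ - ‖γ a - γ q‖ - (b - a)) := by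
      rw [hha, hhb]; ring
    rw [this, abs_mul, abs_of_pos hτ]
    calc τ * |‖γ b - γ q‖ - ‖γ a - γ q‖ - (b - a)| ≤ τ * (3 * θ * (b - a)) :=
      mul_le_mul_of_nonneg_left hk hτ.le
    _ = 3 * θ * τ * (b - a) := by ring
  · intro hbq
    have hX : ‖(γ b - γ q) - (q - b) • (-u)‖ ≤ θ * (q - b) := by
      rw [smul_neg, ← neg_smul, neg_sub]
      have h1 := hflat' b hb q hq
      rw [abs_of_nonpos (by linarith)] at h1
      calc ‖γ b - γ q - (b - q) • u‖ ≤ θ * -(b - q) := h1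
      _ = θ * (q - b) := by ring
    have hY : ‖(γ a - γ b) - (b - a) • (-u)‖ ≤ θ * (b - a) := by
      rw [smul_neg, ← neg_smul, neg_sub]
      have h1 := hflat' a ha b hb
      rw [abs_of_nonpos (by linarith)] at h1
      calc ‖γ a - γ b - (a - b) • u‖ ≤ θ * -(a - b) := h1
      _ = θ * (b - a) := by ring
    have hk := key_cone (-u) (by rw [norm_neg]; exact hu) θ (q - b) (b - a) hθ0.le
      (by linarith) (by linarith) (by linarith) (γ b - γ q) (γ a - γ b) hX hY
    have heq : (γ b - γ q) + (γ a - γ b) = γ a - γ q := by abel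
    rw [heq] at hk
    have : h (γ b) - h (γ a) - τ * (a - b) = -(τ * (‖γ a - γ q‖ - ‖γ b - γ q‖ - (b - a))) := by
      rw [hha, hhb]; ring
    rw [this, abs_neg, abs_mul, abs_of_pos hτ]
    calc τ * |‖γ a - γ q‖ - ‖γ b - γ q‖ - (b - a)| ≤ τ * (3 * θ * (b - a)) :=
      mul_le_mul_of_nonneg_left hk hτ.le
    _ = 3 * θ * τ * (b - a) := by ring
end

section
/- Let X be a nonempty metric space and S ⊆ X. If Player II has a winning strategy in the Banach–Mazur game on X with target S where both players are restricted to playing nonempty open balls, then S is residual (comeagre) in X. -/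
/-!
By Zorn's lemma, choose level by level a maximal family of positions on which Player II's
answers are pairwise disjoint, each position of level `n + 1` extending one of level `n` by a
ball of Player I inside II's answer there. Maximality makes the union of the answers of each
level open and dense; disjointness makes a point lying in all these unions pick out a single
run of the game compatible with `σ`, and the point lies in all of II's balls of that run. So
`S` contains a countable intersection of dense open sets.
-/

open Metric Set Filter

theorem Set.exists_pairwiseDisjoint_maximal {α β : Type*} (s : Set α) (f : α → Set β) :
    ∃ t ⊆ s, t.PairwiseDisjoint f ∧ ∀ a ∈ s, (f a).Nonempty → ∃ b ∈ t, (f a ∩ f b).Nonempty := by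
  obtain ⟨t, ht⟩ := zorn_subset {t | t ⊆ s ∧ t.PairwiseDisjoint f} fun c hcS hc =>
    ⟨⋃₀ c, ⟨sUnion_subset fun t ht => (hcS ht).1,
      (hc.pairwiseDisjoint_sUnion f).2 fun t ht => (hcS ht).2⟩, fun _ => subset_sUnion_of_mem⟩
  refine ⟨t, ht.prop.1, ht.prop.2, fun a ha hfa => ?_⟩
  by_contra! hdisj
  have hinsert : insert a t ∈ {t | t ⊆ s ∧ t.PairwiseDisjoint f} :=
    ⟨insert_subset ha ht.prop.1,
      ht.prop.2.insert fun b hb _ => disjoint_iff_inter_eq_empty.2 (hdisj b hb)⟩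
  have hat : a ∈ t := ht.le_of_ge hinsert (subset_insert a t) (mem_insert a t)
  exact hfa.ne_empty (by simpa using hdisj a hat)

theorem Fin.apply_eq_apply_last_of_init_eq {α : Type*} {F : (n : ℕ) → Fin (n + 1) → α}
    (hF : ∀ n, Fin.init (F (n + 1)) = F n) (n : ℕ) (i : Fin (n + 1)) :
    F n i = F i (Fin.last i) := by
  induction n with
  | zero => rw [Fin.fin_one_eq_zero i]; rfl
  | succ n ih =>
    induction i using Fin.lastCases with
    | last => rfl
    | cast j => exact (congrFun (hF n) j).trans (ih j)

namespace BanachMazur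

variable {X : Type*} [MetricSpace X]

def ballOf (p : X × ℝ) : Set X := ball p.1 p.2

variable (σ : (n : ℕ) → (Fin (n + 1) → X × ℝ) → X × ℝ)

def IsLegal : Prop :=
  ∀ (n : ℕ) (G : Fin (n + 1) → X × ℝ), (∀ i, 0 < (G i).2) →
    0 < (σ n G).2 ∧ ballOf (σ n G) ⊆ ballOf (G (Fin.last n))

def answer (n : ℕ) (G : Fin (n + 1) → X × ℝ) : Set X := ballOf (σ n G)

def extensions (n : ℕ) (T : Set (Fin (n + 1) → X × ℝ)) : Set (Fin (n + 2) → X × ℝ) :=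
  {H | (∀ i, 0 < (H i).2) ∧ Fin.init H ∈ T ∧
    ballOf (H (Fin.last (n + 1))) ⊆ answer σ n (Fin.init H)}

noncomputable def tree : (n : ℕ) → Set (Fin (n + 1) → X × ℝ)
  | 0 => (exists_pairwiseDisjoint_maximal {G | ∀ i, 0 < (G i).2} (answer σ 0)).choose
  | n + 1 => (exists_pairwiseDisjoint_maximal (extensions σ n (tree n)) (answer σ (n + 1))).choose

def candidates : (n : ℕ) → Set (Fin (n + 1) → X × ℝ)
  | 0 => {G | ∀ i, 0 < (G i).2}
  | n + 1 => extensions σ n (tree σ n)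

variable {σ}

theorem tree_spec (n : ℕ) :
    tree σ n ⊆ candidates σ n ∧ (tree σ n).PairwiseDisjoint (answer σ n) ∧
      ∀ G ∈ candidates σ n, (answer σ n G).Nonempty →
        ∃ G' ∈ tree σ n, (answer σ n G ∩ answer σ n G').Nonempty := by
  cases n <;> exact (exists_pairwiseDisjoint_maximal _ _).choose_spec

theorem tree_subset_candidates (n : ℕ) : tree σ n ⊆ candidates σ n :=
  (tree_spec n).1

theorem tree_pairwiseDisjoint (n : ℕ) : (tree σ n).PairwiseDisjoint (answer σ n) :=
  (tree_spec n).2.1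

theorem exists_mem_tree_inter_nonempty {n : ℕ} {G : Fin (n + 1) → X × ℝ}
    (hG : G ∈ candidates σ n) (hne : (answer σ n G).Nonempty) :
    ∃ G' ∈ tree σ n, (answer σ n G ∩ answer σ n G').Nonempty :=
  (tree_spec n).2.2 G hG hne

theorem radius_pos_of_mem_candidates {n : ℕ} {G : Fin (n + 1) → X × ℝ}
    (hG : G ∈ candidates σ n) (i : Fin (n + 1)) : 0 < (G i).2 := by
  cases n with
  | zero => exact hG i
  | succ n => exact hG.1 i

theorem inter_iUnion_tree_nonempty (hσ : IsLegal σ) {n : ℕ} {G : Fin (n + 1) → X × ℝ}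
    (hG : G ∈ candidates σ n) {U : Set X} (hGU : ballOf (G (Fin.last n)) ⊆ U) :
    (U ∩ ⋃ G' ∈ tree σ n, answer σ n G').Nonempty := by
  obtain ⟨hpos, hsub⟩ := hσ n G (radius_pos_of_mem_candidates hG)
  obtain ⟨G', hG', x, hxG, hxG'⟩ := exists_mem_tree_inter_nonempty hG ⟨_, mem_ball_self hpos⟩
  exact ⟨x, hGU (hsub hxG), mem_biUnion hG' hxG'⟩

theorem exists_mem_candidates_ballOf_subset (hσ : IsLegal σ) (n : ℕ) {U : Set X}
    (hU : IsOpen U) (hne : U.Nonempty) :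
    ∃ G ∈ candidates σ n, ballOf (G (Fin.last n)) ⊆ U := by
  induction n with
  | zero =>
    obtain ⟨y, hy⟩ := hne
    obtain ⟨ε, hε, hball⟩ := isOpen_iff.1 hU y hy
    exact ⟨fun _ => (y, ε), fun _ => hε, hball⟩
  | succ n ih =>
    obtain ⟨G, hG, hGU⟩ := ih
    obtain ⟨y, hyU, hy⟩ := inter_iUnion_tree_nonempty hσ hG hGU
    obtain ⟨G₀, hG₀, hyG₀⟩ := mem_iUnion₂.1 hy
    obtain ⟨ε, hε, hball⟩ := isOpen_iff.1 (hU.inter isOpen_ball) y ⟨hyU, hyG₀⟩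
    refine ⟨Fin.snoc G₀ (y, ε), ⟨fun i => ?_, ?_, ?_⟩, ?_⟩
    · induction i using Fin.lastCases with
      | last => simpa using hε
      | cast j => simpa using radius_pos_of_mem_candidates (tree_subset_candidates n hG₀) j
    · rw [Fin.init_snoc]; exact hG₀
    · rw [Fin.init_snoc, Fin.snoc_last]; exact hball.trans inter_subset_right
    · rw [Fin.snoc_last]; exact hball.trans inter_subset_left

theorem dense_iUnion_tree (hσ : IsLegal σ) (n : ℕ) : Dense (⋃ G ∈ tree σ n, answer σ n G) :=
  dense_iff_inter_open.2 fun _ hU hne =>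
    let ⟨_, hG, hGU⟩ := exists_mem_candidates_ballOf_subset hσ n hU hne
    inter_iUnion_tree_nonempty hσ hG hGU

theorem init_eq_of_mem_answer (hσ : IsLegal σ) {n : ℕ} {H : Fin (n + 2) → X × ℝ}
    {G : Fin (n + 1) → X × ℝ} (hH : H ∈ tree σ (n + 1)) (hG : G ∈ tree σ n) {x : X}
    (hxH : x ∈ answer σ (n + 1) H) (hxG : x ∈ answer σ n G) : Fin.init H = G := by
  obtain ⟨hpos, hinit, hsub⟩ := tree_subset_candidates (n + 1) hH
  exact (tree_pairwiseDisjoint n).elim hinit hG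
    (not_disjoint_iff.2 ⟨x, hsub ((hσ (n + 1) H hpos).2 hxH), hxG⟩)

theorem exists_run_of_mem_iInter (hσ : IsLegal σ) {x : X}
    (hx : x ∈ ⋂ n, ⋃ G ∈ tree σ n, answer σ n G) :
    ∃ g : ℕ → X × ℝ, (∀ n, 0 < (g n).2) ∧
      (∀ n, ballOf (g (n + 1)) ⊆ answer σ n (fun i : Fin (n + 1) => g i)) ∧
      ∀ n, x ∈ answer σ n (fun i : Fin (n + 1) => g i) := by
  simp only [mem_iInter, mem_iUnion₂] at hx
  choose F hF hxF using hx
  have hinit n : Fin.init (F (n + 1)) = F n :=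
    init_eq_of_mem_answer hσ (hF (n + 1)) (hF n) (hxF (n + 1)) (hxF n)
  have hrun n : (fun i : Fin (n + 1) => F i (Fin.last i)) = F n :=
    funext fun i => (Fin.apply_eq_apply_last_of_init_eq hinit n i).symm
  refine ⟨fun n => F n (Fin.last n),
    fun n => radius_pos_of_mem_candidates (tree_subset_candidates n (hF n)) _,
    fun n => ?_, fun n => ?_⟩
  · rw [hrun, ← hinit]
    exact (tree_subset_candidates (n + 1) (hF (n + 1))).2.2
  · rw [hrun]
    exact hxF n

end BanachMazur

open BanachMazur

theorem stmt5_general {X : Type*} [MetricSpace X] (S : Set X)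
    (hwin : ∃ σ : (n : ℕ) → (Fin (n+1) → X × ℝ) → X × ℝ,
      (∀ (n : ℕ) (G : Fin (n+1) → X × ℝ), (∀ i, 0 < (G i).2) →
        0 < (σ n G).2 ∧
          Metric.ball (σ n G).1 (σ n G).2 ⊆ Metric.ball (G (Fin.last n)).1 (G (Fin.last n)).2) ∧
      (∀ G : ℕ → X × ℝ, (∀ n, 0 < (G n).2) →
        (∀ n, Metric.ball (G (n+1)).1 (G (n+1)).2 ⊆
          Metric.ball (σ n (fun i : Fin (n+1) => G i.val)).1
            (σ n (fun i : Fin (n+1) => G i.val)).2) →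
        (⋂ n, Metric.ball (σ n (fun i : Fin (n+1) => G i.val)).1
            (σ n (fun i : Fin (n+1) => G i.val)).2) ⊆ S)) :
    S ∈ residual X := by
  obtain ⟨σ, hσ, hwin⟩ := hwin
  have hdense n : ⋃ G ∈ tree σ n, answer σ n G ∈ residual X :=
    residual_of_dense_open (isOpen_biUnion fun _ _ => isOpen_ball) (dense_iUnion_tree hσ n)
  refine mem_of_superset (countable_iInter_mem.2 hdense) fun x hx => ?_
  obtain ⟨g, hpos, hnest, hxg⟩ := exists_run_of_mem_iInter hσ hx
  exact hwin g hpos hnest (mem_iInter.2 hxg)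

/-- If Player II has a winning strategy in the Banach–Mazur game on a nonempty metric
space `X` with target set `S`, where both players are restricted to playing nonempty open
balls, then `S` is residual (comeagre) in `X`.

A strategy for Player II is encoded as a map `σ` assigning to each history of Player I's
moves (pairs of centres and radii) a ball; legality requires that on histories of balls of
positive radius, `σ` produces a ball of positive radius contained in Player I's last ball;
winning requires that for every run of the game compatible with `σ`, the intersection of
Player II's balls is contained in `S`. -/
theorem stmt5 {X : Type*} [MetricSpace X] [Nonempty X] (S : Set X)
    (hwin : ∃ σ : (n : ℕ) → (Fin (n+1) → X × ℝ) → X × ℝ,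
      (∀ (n : ℕ) (G : Fin (n+1) → X × ℝ), (∀ i, 0 < (G i).2) →
        0 < (σ n G).2 ∧
          Metric.ball (σ n G).1 (σ n G).2 ⊆ Metric.ball (G (Fin.last n)).1 (G (Fin.last n)).2) ∧
      (∀ G : ℕ → X × ℝ, (∀ n, 0 < (G n).2) →
        (∀ n, Metric.ball (G (n+1)).1 (G (n+1)).2 ⊆
          Metric.ball (σ n (fun i : Fin (n+1) => G i.val)).1
            (σ n (fun i : Fin (n+1) => G i.val)).2) →
        (⋂ n, Metric.ball (σ n (fun i : Fin (n+1) => G i.val)).1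
            (σ n (fun i : Fin (n+1) => G i.val)).2) ⊆ S)) :
    S ∈ residual X :=
  stmt5_general S hwin
end

section
/- Let f ∈ Lip₁([0,1], ℝ), s < t in [0,1], τ, ε ∈ (0,1), and suppose |f(t) − f(s)| = t − s. Then there exists δ > 0 such that for every g ∈ Lip₁([0,1], ℝ) with ‖g − f‖_∞ ≤ δ, the set C = {r ∈ [s,t] : g′(r) exists and g′(r) ≥ τ} (or with g′(r) ≤ −τ, according to the sign of f(t) − f(s)) has Lebesgue measure at least (1 − ε)(t − s). -/
/-!
Write `g = G` on `[s, t]` with `G` a `1`-Lipschitz function on `ℝ`. Then `x ↦ x - G x` is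
monotone, and its Stieltjes measure dominates, by the Radon–Nikodym theorem, `1 - G'` times
Lebesgue measure. Where `G' < τ` this density exceeds `1 - τ`, so that set has measure at most
`((t - s) - (G t - G s)) / (1 - τ)`, which is small once `g` is uniformly close to a function
whose increment on `[s, t]` is the maximal one, `t - s`. The case `f t - f s = -(t - s)`
follows by applying this to `-g`.
-/

open MeasureTheory Set

theorem StieltjesFunction.ofReal_mul_volume_le_measure (F : StieltjesFunction ℝ) (S : Set ℝ)
    (c : ℝ) :
    ENNReal.ofReal c * volume {x ∈ S | ∃ d, HasDerivAt F d x ∧ c ≤ d} ≤ F.measure S := by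
  set A := {x ∈ S | ∃ d, HasDerivAt F d x ∧ c ≤ d}
  have hc : ∀ᵐ x, x ∈ A → ENNReal.ofReal c ≤ F.measure.rnDeriv volume x := by
    filter_upwards [F.ae_hasDerivAt] with x hx hxA
    obtain ⟨-, d, hd, hcd⟩ := hxA
    calc ENNReal.ofReal c ≤ ENNReal.ofReal d := ENNReal.ofReal_le_ofReal hcd
      _ = ENNReal.ofReal (F.measure.rnDeriv volume x).toReal := by rw [hd.unique hx]
      _ ≤ _ := ENNReal.ofReal_toReal_le
  calc ENNReal.ofReal c * volume A = ∫⁻ _ in A, ENNReal.ofReal c :=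
        (setLIntegral_const _ _).symm
    _ ≤ ∫⁻ x in A, F.measure.rnDeriv volume x :=
        setLIntegral_mono_ae (Measure.measurable_rnDeriv _ _).aemeasurable hc
    _ ≤ F.measure A := Measure.setLIntegral_rnDeriv_le A
    _ ≤ F.measure S := measure_mono (sep_subset _ _)

theorem volume_le_volume_setOf_hasDerivAt_add {f : ℝ → ℝ}
    (hf : ∀ᵐ x, DifferentiableAt ℝ f x) (S : Set ℝ) (p : ℝ → Prop) :
    volume S ≤ volume {x ∈ S | ∃ d, HasDerivAt f d x ∧ p d} +
      volume {x ∈ S | ∃ d, HasDerivAt f d x ∧ ¬ p d} := by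
  have hN : volume {x | ¬ DifferentiableAt ℝ f x} = 0 := ae_iff.1 hf
  calc volume S ≤ volume ({x ∈ S | ∃ d, HasDerivAt f d x ∧ p d} ∪
        {x ∈ S | ∃ d, HasDerivAt f d x ∧ ¬ p d} ∪ {x | ¬ DifferentiableAt ℝ f x}) := by
        refine measure_mono fun x hx => ?_
        by_cases hd : DifferentiableAt ℝ f x
        · by_cases hp : p (deriv f x)
          · exact Or.inl (Or.inl ⟨hx, _, hd.hasDerivAt, hp⟩)
          · exact Or.inl (Or.inr ⟨hx, _, hd.hasDerivAt, hp⟩)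
        · exact Or.inr hd
    _ ≤ _ := by
        refine (measure_union_le _ _).trans ?_
        rw [hN, add_zero]
        exact measure_union_le _ _

namespace LipschitzWith

theorem sub_le_sub_of_le {G : ℝ → ℝ} (hG : LipschitzWith 1 G) {x y : ℝ} (hxy : x ≤ y) :
    G y - G x ≤ y - x := by
  have h := hG.dist_le_mul y x
  rw [NNReal.coe_one, one_mul, Real.dist_eq, Real.dist_eq, abs_of_nonneg (sub_nonneg.2 hxy)] at h
  exact (le_abs_self _).trans h

def idSubStieltjes {G : ℝ → ℝ} (hG : LipschitzWith 1 G) : StieltjesFunction ℝ where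
  toFun x := x - G x
  mono' x y hxy := by
    have := hG.sub_le_sub_of_le hxy
    show x - G x ≤ y - G y
    linarith
  right_continuous' x := (continuous_id.sub hG.continuous).continuousWithinAt

theorem ofReal_mul_volume_setOf_deriv_lt_le {G : ℝ → ℝ} (hG : LipschitzWith 1 G)
    (a b τ : ℝ) :
    ENNReal.ofReal (1 - τ) * volume {x ∈ Ioo a b | ∃ d, HasDerivAt G d x ∧ d < τ} ≤
      ENNReal.ofReal (b - a - (G b - G a)) := by
  set F := hG.idSubStieltjes
  calc _ ≤ ENNReal.ofReal (1 - τ) *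
        volume {x ∈ Ioc a b | ∃ d, HasDerivAt F d x ∧ 1 - τ ≤ d} := by
        refine mul_le_mul_right (measure_mono ?_) _
        rintro x ⟨hx, d, hd, hdτ⟩
        exact ⟨Ioo_subset_Ioc_self hx, 1 - d, (hasDerivAt_id x).sub hd, by linarith⟩
    _ ≤ F.measure (Ioc a b) := F.ofReal_mul_volume_le_measure _ _
    _ = _ := by
        rw [StieltjesFunction.measure_Ioc]
        congr 1
        simp only [F, idSubStieltjes]
        ring

end LipschitzWith

namespace LipschitzOnWith

variable {g : ℝ → ℝ} {s t τ ε : ℝ}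

theorem ofReal_le_volume_setOf_le_deriv (hg : LipschitzOnWith 1 g (Icc s t)) (hst : s ≤ t)
    (hτ : τ < 1) (hinc : t - s - (1 - τ) * (ε * (t - s)) ≤ g t - g s) :
    ENNReal.ofReal ((1 - ε) * (t - s)) ≤
      volume {r | r ∈ Icc s t ∧ ∃ v, HasDerivAt g v r ∧ τ ≤ v} := by
  obtain ⟨G, hG, hgG⟩ := hg.extend_real
  have hG_st := hG.sub_le_sub_of_le hst
  rw [hgG ⟨hst, le_rfl⟩, hgG ⟨le_rfl, hst⟩] at hinc
  have hτ' : 0 < 1 - τ := sub_pos.2 hτ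
  have hε : 0 ≤ ε * (t - s) := nonneg_of_mul_nonneg_right (by linarith) hτ'
  have hbad : volume {x ∈ Ioo s t | ∃ d, HasDerivAt G d x ∧ ¬ τ ≤ d} ≤
      ENNReal.ofReal (ε * (t - s)) := by
    rw [← ENNReal.mul_le_mul_iff_right (ENNReal.ofReal_pos.2 hτ').ne' ENNReal.ofReal_ne_top,
      ← ENNReal.ofReal_mul hτ'.le]
    simp_rw [not_le]
    exact (hG.ofReal_mul_volume_setOf_deriv_lt_le s t τ).trans
      (ENNReal.ofReal_le_ofReal (by linarith))
  have hgood : {x ∈ Ioo s t | ∃ d, HasDerivAt G d x ∧ τ ≤ d} ⊆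
      {r | r ∈ Icc s t ∧ ∃ v, HasDerivAt g v r ∧ τ ≤ v} := by
    rintro r ⟨hr, v, hv, hτv⟩
    refine ⟨Ioo_subset_Icc_self hr, v, hv.congr_of_eventuallyEq ?_, hτv⟩
    filter_upwards [Ioo_mem_nhds hr.1 hr.2] with y hy using hgG (Ioo_subset_Icc_self hy)
  rcases le_or_gt ((1 - ε) * (t - s)) 0 with hneg | hpos
  · simp [ENNReal.ofReal_of_nonpos hneg]
  refine ENNReal.le_of_add_le_add_right (a := ENNReal.ofReal (ε * (t - s)))
    ENNReal.ofReal_ne_top ?_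
  calc ENNReal.ofReal ((1 - ε) * (t - s)) + ENNReal.ofReal (ε * (t - s))
      = volume (Ioo s t) := by rw [Real.volume_Ioo, ← ENNReal.ofReal_add hpos.le hε]; ring_nf
    _ ≤ _ := (volume_le_volume_setOf_hasDerivAt_add hG.ae_differentiableAt_of_real _
          (τ ≤ ·)).trans (add_le_add (measure_mono hgood) hbad)

theorem ofReal_le_volume_setOf_deriv_le_neg (hg : LipschitzOnWith 1 g (Icc s t)) (hst : s ≤ t)
    (hτ : τ < 1) (hinc : t - s - (1 - τ) * (ε * (t - s)) ≤ g s - g t) :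
    ENNReal.ofReal ((1 - ε) * (t - s)) ≤
      volume {r | r ∈ Icc s t ∧ ∃ v, HasDerivAt g v r ∧ v ≤ -τ} := by
  have hinc' : t - s - (1 - τ) * (ε * (t - s)) ≤ (-g) t - (-g) s := by
    simp only [Pi.neg_apply]
    linarith
  refine (hg.neg.ofReal_le_volume_setOf_le_deriv hst hτ hinc').trans (measure_mono ?_)
  rintro r ⟨hr, v, hv, hτv⟩
  exact ⟨hr, -v, by simpa using hv.neg, by linarith⟩

end LipschitzOnWith

theorem stmt6_general (f : ℝ → ℝ)
    (s t : ℝ) (hs : s ∈ Set.Icc (0:ℝ) 1) (ht : t ∈ Set.Icc (0:ℝ) 1) (hst : s < t)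
    (τ ε : ℝ) (hτ : τ ∈ Set.Ioo (0:ℝ) 1) (hε : ε ∈ Set.Ioo (0:ℝ) 1)
    (hiso : |f t - f s| = t - s) :
    ∃ δ > 0, ∀ g : ℝ → ℝ, LipschitzOnWith 1 g (Set.Icc 0 1) →
      (∀ x ∈ Set.Icc (0:ℝ) 1, |g x - f x| ≤ δ) →
      ENNReal.ofReal ((1 - ε) * (t - s)) ≤
        volume {r | r ∈ Set.Icc s t ∧ ∃ v : ℝ, HasDerivAt g v r ∧
          (0 ≤ f t - f s → τ ≤ v) ∧ (f t - f s ≤ 0 → v ≤ -τ)} := by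
  -- the errors `δ` at `s` and at `t` may cost `g` an increment deficit of `(1 - τ) ε (t - s)`
  refine ⟨(1 - τ) * (ε * (t - s)) / 2,
    half_pos (mul_pos (sub_pos.2 hτ.2) (mul_pos hε.1 (sub_pos.2 hst))), fun g hg hclose => ?_⟩
  have hg_st := hg.mono (Icc_subset_Icc hs.1 ht.2)
  have hgt := abs_le.1 (hclose t ht)
  have hgs := abs_le.1 (hclose s hs)
  rcases le_or_gt 0 (f t - f s) with hsign | hsign
  · have hf : f t - f s = t - s := by rw [← hiso, abs_of_nonneg hsign]
    refine (hg_st.ofReal_le_volume_setOf_le_deriv hst.le hτ.2 (by linarith)).trans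
      (measure_mono ?_)
    rintro r ⟨hr, v, hv, hτv⟩
    exact ⟨hr, v, hv, fun _ => hτv, fun h => absurd h (by linarith)⟩
  · have hf : f t - f s = -(t - s) := by rw [← hiso, abs_of_neg hsign, neg_neg]
    refine (hg_st.ofReal_le_volume_setOf_deriv_le_neg hst.le hτ.2 (by linarith)).trans
      (measure_mono ?_)
    rintro r ⟨hr, v, hv, hvτ⟩
    exact ⟨hr, v, hv, fun h => absurd h (by linarith), fun _ => hvτ⟩

/-- If `f` is `1`-Lipschitz on `[0,1]`, `s < t` and `|f t - f s| = t - s`, then every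
`1`-Lipschitz function `g` that is uniformly `δ`-close to `f` (for a suitable `δ > 0`) has
derivative at least `τ` (resp. at most `-τ`, according to the sign of `f t - f s`) on a
subset of `[s,t]` of measure at least `(1-ε)(t-s)`. -/
theorem stmt6 (f : ℝ → ℝ) (hf : LipschitzOnWith 1 f (Set.Icc 0 1))
    (s t : ℝ) (hs : s ∈ Set.Icc (0:ℝ) 1) (ht : t ∈ Set.Icc (0:ℝ) 1) (hst : s < t)
    (τ ε : ℝ) (hτ : τ ∈ Set.Ioo (0:ℝ) 1) (hε : ε ∈ Set.Ioo (0:ℝ) 1)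
    (hiso : |f t - f s| = t - s) :
    ∃ δ > 0, ∀ g : ℝ → ℝ, LipschitzOnWith 1 g (Set.Icc 0 1) →
      (∀ x ∈ Set.Icc (0:ℝ) 1, |g x - f x| ≤ δ) →
      ENNReal.ofReal ((1 - ε) * (t - s)) ≤
        volume {r | r ∈ Set.Icc s t ∧ ∃ v : ℝ, HasDerivAt g v r ∧
          (0 ≤ f t - f s → τ ≤ v) ∧ (f t - f s ≤ 0 → v ≤ -τ)} :=
  stmt6_general f s t hs ht hst τ ε hτ hε hiso
end

section
/- Let u ∈ S^{d−1}, 0 < θ < 1/2, and let v₁ = (t − p′)(u + θw₁), v₂ = (t − p)(u + θw₂) with p < p′ < t real numbers and ‖w₁‖, ‖w₂‖ ≤ 1. Then ‖v₁/‖v₁‖ − v₂/‖v₂‖‖ ≤ 7θ. -/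
/-! Both normalised vectors are within `2θ` of `u`: normalisation ignores the positive factors
`t - p'` and `t - p`, and for `‖u‖ = 1` it moves `x` by at most `|1 - ‖x‖| ≤ ‖x - u‖`, so it at
most doubles the distance to `u`. The triangle inequality gives `4θ ≤ 7θ`. -/

namespace NormedSpace

variable {V : Type*} [NormedAddCommGroup V] [NormedSpace ℝ V]

theorem norm_normalize_sub_self_le (x : V) : ‖normalize x - x‖ ≤ |1 - ‖x‖| := by
  rcases eq_or_ne x 0 with rfl | hx
  · simp
  have hsub : normalize x - x = (1 - ‖x‖) • normalize x := by
    rw [sub_smul, one_smul, norm_smul_normalize]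
  rw [hsub, norm_smul, norm_normalize hx, Real.norm_eq_abs, mul_one]

theorem norm_normalize_sub_le_two_mul {u : V} (hu : ‖u‖ = 1) (x : V) :
    ‖normalize x - u‖ ≤ 2 * ‖x - u‖ := by
  have hnorm : |1 - ‖x‖| ≤ ‖x - u‖ := by
    rw [← hu, abs_sub_comm]
    exact abs_norm_sub_norm_le x u
  calc ‖normalize x - u‖ ≤ ‖normalize x - x‖ + ‖x - u‖ := norm_sub_le_norm_sub_add_norm_sub _ _ _
    _ ≤ 2 * ‖x - u‖ := by linarith [norm_normalize_sub_self_le x]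

theorem norm_normalize_add_smul_sub_le {u w : V} (hu : ‖u‖ = 1) (hw : ‖w‖ ≤ 1) {θ : ℝ}
    (hθ : 0 ≤ θ) : ‖normalize (u + θ • w) - u‖ ≤ 2 * θ := by
  have hdist : ‖u + θ • w - u‖ ≤ θ := by
    rw [add_sub_cancel_left, norm_smul, Real.norm_eq_abs, abs_of_nonneg hθ]
    exact mul_le_of_le_one_right hθ hw
  linarith [norm_normalize_sub_le_two_mul hu (u + θ • w)]

end NormedSpace

open NormedSpace in
theorem stmt10_general (d : ℕ) (u w₁ w₂ : EuclideanSpace ℝ (Fin d)) (hu : ‖u‖ = 1)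
    (hw₁ : ‖w₁‖ ≤ 1) (hw₂ : ‖w₂‖ ≤ 1) (θ : ℝ) (hθ0 : 0 < θ)
    (p p' t : ℝ) (h1 : p < p') (h2 : p' < t)
    (v₁ v₂ : EuclideanSpace ℝ (Fin d))
    (hv₁ : v₁ = (t - p') • (u + θ • w₁)) (hv₂ : v₂ = (t - p) • (u + θ • w₂)) :
    ‖‖v₁‖⁻¹ • v₁ - ‖v₂‖⁻¹ • v₂‖ ≤ 7 * θ := by
  change ‖normalize v₁ - normalize v₂‖ ≤ 7 * θ
  rw [hv₁, hv₂, normalize_smul_of_pos (by linarith), normalize_smul_of_pos (by linarith)]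
  calc ‖normalize (u + θ • w₁) - normalize (u + θ • w₂)‖
      ≤ ‖normalize (u + θ • w₁) - u‖ + ‖normalize (u + θ • w₂) - u‖ :=
        by simpa only [dist_eq_norm] using dist_triangle_right _ _ u
    _ ≤ 2 * θ + 2 * θ :=
        add_le_add (norm_normalize_add_smul_sub_le hu hw₁ hθ0.le)
          (norm_normalize_add_smul_sub_le hu hw₂ hθ0.le)
    _ ≤ 7 * θ := by linarith

/-- If `v₁ = (t - p')(u + θw₁)` and `v₂ = (t - p)(u + θw₂)` with `p < p' < t`,
`‖u‖ = 1`, `‖w₁‖, ‖w₂‖ ≤ 1` and `0 < θ < 1/2`, then the normalisations of `v₁` and `v₂`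
differ by at most `7θ`. -/
theorem stmt10 (d : ℕ) (u w₁ w₂ : EuclideanSpace ℝ (Fin d)) (hu : ‖u‖ = 1)
    (hw₁ : ‖w₁‖ ≤ 1) (hw₂ : ‖w₂‖ ≤ 1) (θ : ℝ) (hθ0 : 0 < θ) (hθ : θ < 1/2)
    (p p' t : ℝ) (h1 : p < p') (h2 : p' < t)
    (v₁ v₂ : EuclideanSpace ℝ (Fin d))
    (hv₁ : v₁ = (t - p') • (u + θ • w₁)) (hv₂ : v₂ = (t - p) • (u + θ • w₂)) :
    ‖‖v₁‖⁻¹ • v₁ - ‖v₂‖⁻¹ • v₂‖ ≤ 7 * θ :=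
  stmt10_general d u w₁ w₂ hu hw₁ hw₂ θ hθ0 p p' t h1 h2 v₁ v₂ hv₁ hv₂
end

section
/- Let U be a universal differentiability set in [0,1]^d and V ⊆ U be such that, for a typical f ∈ Lip₁([0,1]^d), every point of U at which f is differentiable lies in V. If both V and U \ V are purely unrectifiable, then there is a Lipschitz function on ℝ^d nowhere differentiable on U — a contradiction. Hence V is not purely unrectifiable. -/
open MeasureTheory
open scoped BoundedContinuousFunction

/-- The closed unit cube `[0,1]^d` in Euclidean space. -/
def unitCube (d : ℕ) : Set (EuclideanSpace ℝ (Fin d)) :=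
  {x | ∀ i, x i ∈ Set.Icc (0 : ℝ) 1}

/-- The space `Lip₁([0,1]^d)` of `1`-Lipschitz real functions on the cube, with the
supremum metric. -/
abbrev Lip1 (d : ℕ) := {f : ↥(unitCube d) →ᵇ ℝ // LipschitzWith 1 ⇑f}

/-- `P` is purely unrectifiable: every Lipschitz curve `γ : [0,1] → ℝ^d` whose derivative is
bounded away from zero in magnitude a.e. meets `P` in a set of parameters of measure zero. -/
def PurelyUnrectifiable (d : ℕ) (P : Set (EuclideanSpace ℝ (Fin d))) : Prop :=
  ∀ (γ : ℝ → EuclideanSpace ℝ (Fin d)) (K : NNReal), LipschitzWith K γ →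
    (∃ c : ℝ, 0 < c ∧ ∀ᵐ t ∂(volume : Measure ℝ), t ∈ Set.Icc (0:ℝ) 1 →
      ∀ v, HasDerivAt γ v t → c ≤ ‖v‖) →
    volume (Set.Icc (0:ℝ) 1 ∩ γ ⁻¹' P) = 0

/-- A function on the cube is differentiable at `x` if some extension of it to `ℝ^d` is. -/
def DiffWithinCube (d : ℕ) (f : ↥(unitCube d) →ᵇ ℝ) (x : EuclideanSpace ℝ (Fin d)) : Prop :=
  ∃ F : EuclideanSpace ℝ (Fin d) → ℝ,
    (∀ y : ↥(unitCube d), F y = f y) ∧ DifferentiableAt ℝ F x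

/-- If `U ⊆ [0,1]^d` is a universal differentiability set and `V ⊆ U` captures, for a
typical `f ∈ Lip₁([0,1]^d)`, all differentiability points of `f` in `U`, then `V` is not
purely unrectifiable.  (Here the auxiliary theorems that typical non-differentiability sets
are purely unrectifiable, and that every purely unrectifiable set admits a Lipschitz
function nowhere differentiable on it, are taken as hypotheses.) -/
theorem stmt12 (d : ℕ) (hd : 1 ≤ d) (U V : Set (EuclideanSpace ℝ (Fin d)))
    (hU : U ⊆ unitCube d) (hVU : V ⊆ U)
    (hUDS : ∀ (g : EuclideanSpace ℝ (Fin d) → ℝ) (K : NNReal), LipschitzWith K g →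
      ∃ x ∈ U, DifferentiableAt ℝ g x)
    (htyp : {f : Lip1 d | ∀ x ∈ U, DiffWithinCube d f.1 x → x ∈ V} ∈ residual (Lip1 d))
    (Htypnd : ∀ A : Set (EuclideanSpace ℝ (Fin d)), A ⊆ unitCube d →
      {f : Lip1 d | ∀ x ∈ A, ¬ DiffWithinCube d f.1 x} ∈ residual (Lip1 d) →
      PurelyUnrectifiable d A)
    (Hmp : ∀ P : Set (EuclideanSpace ℝ (Fin d)), PurelyUnrectifiable d P →
      ∃ (g : EuclideanSpace ℝ (Fin d) → ℝ) (K : NNReal), LipschitzWith K g ∧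
        ∀ x ∈ P, ¬ DifferentiableAt ℝ g x) :
    ¬ PurelyUnrectifiable d V := by
  intro hV
  have hA : U \ V ⊆ unitCube d := fun x hx => hU hx.1
  have hres : {f : Lip1 d | ∀ x ∈ U \ V, ¬ DiffWithinCube d f.1 x} ∈ residual (Lip1 d) := by
    filter_upwards [htyp] with f hf x hx hdx
    exact hx.2 (hf x hx.1 hdx)
  have hUV := Htypnd _ hA hres
  have hPU : PurelyUnrectifiable d U := by
    intro γ K hγ hc
    have h1 := hV γ K hγ hc
    have h2 := hUV γ K hγ hc
    have hsub : Set.Icc (0:ℝ) 1 ∩ γ ⁻¹' U ⊆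
        (Set.Icc (0:ℝ) 1 ∩ γ ⁻¹' V) ∪ (Set.Icc (0:ℝ) 1 ∩ γ ⁻¹' (U \ V)) := by
      rintro t ⟨ht, htU⟩
      by_cases h : γ t ∈ V
      · exact Or.inl ⟨ht, h⟩
      · exact Or.inr ⟨ht, htU, h⟩
    exact measure_mono_null hsub (measure_union_null h1 h2)
  obtain ⟨g, K, hg, hng⟩ := Hmp U hPU
  obtain ⟨x, hx, hdx⟩ := hUDS g K hg
  exact hng x hx hdx
end

section
/- Let γ : [0,1] → (0,1)^d be the length parameterisation of a line segment, 𝒫 a dense subset of Lip₁([0,1], ℝ), t₀ ∈ (0,1), f ∈ Lip₁([0,1]^d, ℝ^l) with Lip(f) < 1, ε ∈ (0,1), and j ∈ {1,…,l}. Then there exist p ∈ 𝒫, η > 0, and g = (g₁,…,g_l) ∈ Lip₁([0,1]^d, ℝ^l) such that ‖g(x) − f(x)‖ ≤ ε for all x, g_j ∘ γ agrees with p on (t₀ − η, t₀ + η), and if l = 1 then g₁ ∘ γ = p on all of [0,1]. -/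
open scoped BoundedContinuousFunction

/-- The open unit cube `(0,1)^d` in Euclidean space. -/
def openCube (d : ℕ) : Set (EuclideanSpace ℝ (Fin d)) :=
  {x | ∀ i, x i ∈ Set.Ioo (0 : ℝ) 1}

lemma openCube_subset_unitCube (d : ℕ) : openCube d ⊆ unitCube d :=
  fun _ hx i => ⟨le_of_lt (hx i).1, le_of_lt (hx i).2⟩

/-- The space `Lip₁([0,1]^d, ℝ^l)` of `1`-Lipschitz maps into `ℝ^l`, with the sup metric. -/
abbrev LipV (d l : ℕ) :=
  {f : ↥(unitCube d) →ᵇ EuclideanSpace ℝ (Fin l) // LipschitzWith 1 ⇑f}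

/-- The space `Lip₁([0,1], ℝ)` of `1`-Lipschitz functions on `[0,1]`, sup metric. -/
abbrev Lip1I := {f : ↥(Set.Icc (0:ℝ) 1) →ᵇ ℝ // LipschitzWith 1 ⇑f}

/-!
Along the segment, `γ t = γ 0 + t • v` with `‖v‖ = 1`. Composing `f` with the coordinatewise
retraction onto the cube extends it to a `1`-Lipschitz map `F` on all of `ℝ^d`. Replacing the
`j`-th component of `F` by `h` keeps the map `1`-Lipschitz as soon as
`‖ΔF‖² - (ΔF_j)² + (Δh)² ≤ ‖Δx‖²`, and clamping `h` to the band `F_j ± δ` keeps this while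
making the result `δ`-close to `F`.

For `l = 1` there are no other components, so `h x = p (⟪x, v⟫ - ⟪γ 0, v⟫)` works on all of `γ`.
In general the budget for `h` is made by first sliding every point `x` back along `v` by
`φ ⟪x, v⟫ = clamp ⟪x - γ t₀, v⟫ to [-η, η]`: this collapses a slab of width `2η` around `γ t₀`,
moves points by at most `η`, and since `(Δφ)² ≤ Δφ · Δ⟪x, v⟫` the slid point together with the
value of `φ` depends `1`-Lipschitzly on `x` in the Euclidean product norm. Hence `F ∘ slide` with
`h = p ∘ (t₀ + φ)` satisfies the inequality, and `h ∘ γ = p` on the window `|t - t₀| ≤ η`.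
-/

open Set
open scoped RealInnerProductSpace

local notation "ℝ^" n:max => EuclideanSpace ℝ (Fin n)

lemma sq_sub_le_mul_sub_of_monotone {φ : ℝ → ℝ} (hmono : Monotone φ) (hlip : LipschitzWith 1 φ)
    (a b : ℝ) : (φ a - φ b) ^ 2 ≤ (φ a - φ b) * (a - b) := by
  have hab : |φ a - φ b| ≤ |a - b| := by simpa [Real.dist_eq] using hlip.dist_le_mul a b
  rcases le_total b a with h | h
  · have := hmono h
    rw [abs_of_nonneg (by linarith), abs_of_nonneg (by linarith)] at hab
    nlinarith
  · have := hmono h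
    rw [abs_of_nonpos (by linarith), abs_of_nonpos (by linarith)] at hab
    nlinarith

section InnerProductSpace

variable {E : Type*} [NormedAddCommGroup E] [InnerProductSpace ℝ E]

lemma norm_add_smul_sq_of_norm_eq_one {e : E} (he : ‖e‖ = 1) (a : E) (c : ℝ) :
    ‖a + c • e‖ ^ 2 = ‖a‖ ^ 2 - ⟪a, e⟫ ^ 2 + (⟪a, e⟫ + c) ^ 2 := by
  rw [norm_add_sq_real, inner_smul_right, norm_smul, he, Real.norm_eq_abs, mul_one, sq_abs]
  ring

def slide (v : E) (φ : ℝ → ℝ) (x : E) : E := x - φ ⟪x, v⟫ • v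

variable {v : E} {φ : ℝ → ℝ}

lemma norm_slide_sub_self (hv : ‖v‖ = 1) (x : E) : ‖slide v φ x - x‖ = |φ ⟪x, v⟫| := by
  rw [slide, sub_sub_cancel_left, norm_neg, norm_smul, hv, mul_one, Real.norm_eq_abs]

lemma norm_slide_sub_slide_sq_add_sq_le (hv : ‖v‖ = 1) (hmono : Monotone φ)
    (hlip : LipschitzWith 1 φ) (x y : E) :
    ‖slide v φ x - slide v φ y‖ ^ 2 + (φ ⟪x, v⟫ - φ ⟪y, v⟫) ^ 2 ≤ ‖x - y‖ ^ 2 := by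
  have hdiff : slide v φ x - slide v φ y = (x - y) + (-(φ ⟪x, v⟫ - φ ⟪y, v⟫)) • v := by
    simp only [slide]; module
  rw [hdiff, norm_add_smul_sq_of_norm_eq_one hv, inner_sub_left]
  nlinarith [sq_sub_le_mul_sub_of_monotone hmono hlip ⟪x, v⟫ ⟪y, v⟫]

lemma lipschitzWith_slide (hv : ‖v‖ = 1) (hmono : Monotone φ) (hlip : LipschitzWith 1 φ) :
    LipschitzWith 1 (slide v φ) := by
  refine LipschitzWith.of_dist_le_mul fun x y => ?_
  rw [NNReal.coe_one, one_mul, dist_eq_norm, dist_eq_norm,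
    ← pow_le_pow_iff_left₀ (norm_nonneg _) (norm_nonneg _) two_ne_zero]
  linarith [norm_slide_sub_slide_sq_add_sq_le hv hmono hlip x y, sq_nonneg (φ ⟪x, v⟫ - φ ⟪y, v⟫)]

def replaceComponent (e a : E) (s : ℝ) : E := a + (s - ⟪a, e⟫) • e

variable {e : E}

lemma inner_replaceComponent (he : ‖e‖ = 1) (a : E) (s : ℝ) : ⟪replaceComponent e a s, e⟫ = s := by
  rw [replaceComponent, inner_add_left, inner_smul_left, real_inner_self_eq_norm_sq, he]
  simp

lemma norm_replaceComponent_sub_self (he : ‖e‖ = 1) (a : E) (s : ℝ) :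
    ‖replaceComponent e a s - a‖ = |s - ⟪a, e⟫| := by
  rw [replaceComponent, add_sub_cancel_left, norm_smul, he, mul_one, Real.norm_eq_abs]

lemma norm_replaceComponent_sub_sq (he : ‖e‖ = 1) (a b : E) (s t : ℝ) :
    ‖replaceComponent e a s - replaceComponent e b t‖ ^ 2
      = ‖a - b‖ ^ 2 - ⟪a - b, e⟫ ^ 2 + (s - t) ^ 2 := by
  have hdiff : replaceComponent e a s - replaceComponent e b t
      = (a - b) + ((s - t) - ⟪a - b, e⟫) • e := by
    simp only [replaceComponent, inner_sub_left]; module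
  rw [hdiff, norm_add_smul_sq_of_norm_eq_one he]
  ring

end InnerProductSpace

def bandClamp (δ b s : ℝ) : ℝ := max (b - δ) (min (b + δ) s)

section bandClamp

variable {δ b s : ℝ}

lemma abs_bandClamp_sub_le (hδ : 0 ≤ δ) (b s : ℝ) : |bandClamp δ b s - b| ≤ δ := by
  rw [bandClamp, abs_le]
  constructor
  · linarith [le_max_left (b - δ) (min (b + δ) s)]
  · linarith [max_le (by linarith : b - δ ≤ b + δ) (min_le_left (b + δ) s)]

lemma bandClamp_eq_self (h : |s - b| ≤ δ) : bandClamp δ b s = s := by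
  obtain ⟨h₁, h₂⟩ := abs_le.mp h
  rw [bandClamp, min_eq_right (by linarith), max_eq_right (by linarith)]

lemma abs_bandClamp_sub_bandClamp_le (δ b b' s s' : ℝ) :
    |bandClamp δ b s - bandClamp δ b' s'| ≤ max |b - b'| |s - s'| := by
  refine (abs_max_sub_max_le_max _ _ _ _).trans
    (max_le ?_ ((abs_min_sub_min_le_max _ _ _ _).trans ?_))
  · rw [sub_sub_sub_cancel_right]; exact le_max_left _ _
  · rw [add_sub_add_right_eq_sub]

lemma bandClamp_monotone (δ b : ℝ) : Monotone (bandClamp δ b) :=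
  fun _ _ h => max_le_max le_rfl (min_le_min le_rfl h)

lemma lipschitzWith_bandClamp (δ b : ℝ) : LipschitzWith 1 (bandClamp δ b) :=
  LipschitzWith.of_dist_le_mul fun s s' => by
    simpa [Real.dist_eq] using abs_bandClamp_sub_bandClamp_le δ b b s s'

end bandClamp

theorem exists_lipschitzWith_inner_eq {E X : Type*} [NormedAddCommGroup E] [InnerProductSpace ℝ E]
    [PseudoMetricSpace X] {e : E} (he : ‖e‖ = 1) {F : X → E} {H : X → ℝ} (hF : LipschitzWith 1 F)
    (hFH : ∀ x y, ‖F x - F y‖ ^ 2 - ⟪F x - F y, e⟫ ^ 2 + (H x - H y) ^ 2 ≤ dist x y ^ 2)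
    {δ : ℝ} (hδ : 0 ≤ δ) :
    ∃ G : X → E, LipschitzWith 1 G ∧ (∀ x, ‖G x - F x‖ ≤ δ) ∧
      ∀ x, |H x - ⟪F x, e⟫| ≤ δ → ⟪G x, e⟫ = H x := by
  set h := fun x => bandClamp δ ⟪F x, e⟫ (H x)
  refine ⟨fun x => replaceComponent e (F x) (h x), ?_, fun x => ?_, fun x hx => ?_⟩
  · refine LipschitzWith.of_dist_le_mul fun x y => ?_
    rw [NNReal.coe_one, one_mul, dist_eq_norm,
      ← pow_le_pow_iff_left₀ (norm_nonneg _) dist_nonneg two_ne_zero,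
      norm_replaceComponent_sub_sq he]
    have hFxy : ‖F x - F y‖ ^ 2 ≤ dist x y ^ 2 := by
      rw [← dist_eq_norm]
      exact pow_le_pow_left₀ dist_nonneg (by simpa using hF.dist_le_mul x y) 2
    have hh := abs_bandClamp_sub_bandClamp_le δ ⟪F x, e⟫ ⟪F y, e⟫ (H x) (H y)
    rw [← inner_sub_left] at hh
    rcases le_max_iff.mp hh with hB | hH
    · linarith [sq_le_sq.mpr hB]
    · linarith [sq_le_sq.mpr hH, hFH x y]
  · rw [norm_replaceComponent_sub_self he]
    exact abs_bandClamp_sub_le hδ _ _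
  · rw [inner_replaceComponent he]
    exact bandClamp_eq_self hx

lemma BoundedContinuousFunction.exists_coe_eq_of_norm_sub_le {X E : Type*} [TopologicalSpace X]
    [SeminormedAddCommGroup E] (f : X →ᵇ E) {g : X → E} (hg : Continuous g) {C : ℝ}
    (hC : ∀ x, ‖g x - f x‖ ≤ C) : ∃ G : X →ᵇ E, ⇑G = g :=
  ⟨f + .ofNormedAddCommGroup (g - f) (hg.sub f.continuous) C hC, by ext x; simp⟩

lemma EuclideanSpace.inner_single_one_right {n : ℕ} (a : ℝ^n) (j : Fin n) :
    ⟪a, EuclideanSpace.single j 1⟫ = a j := by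
  simp [EuclideanSpace.inner_single_right]

noncomputable def cubeRetraction (d : ℕ) (x : ℝ^d) : unitCube d :=
  ⟨WithLp.toLp 2 fun i => (projIcc 0 1 zero_le_one (x i) : ℝ),
    fun i => (projIcc 0 1 zero_le_one (x i)).2⟩

lemma cubeRetraction_of_mem {d : ℕ} {x : ℝ^d} (hx : x ∈ unitCube d) :
    (cubeRetraction d x : ℝ^d) = x := by
  ext i
  exact congrArg Subtype.val (projIcc_of_mem zero_le_one (hx i))

lemma lipschitzWith_cubeRetraction (d : ℕ) : LipschitzWith 1 (cubeRetraction d) := by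
  refine LipschitzWith.of_dist_le_mul fun x y => ?_
  rw [NNReal.coe_one, one_mul, Subtype.dist_eq, EuclideanSpace.dist_eq, EuclideanSpace.dist_eq]
  refine Real.sqrt_le_sqrt (Finset.sum_le_sum fun i _ => pow_le_pow_left₀ dist_nonneg ?_ 2)
  have h := (LipschitzWith.projIcc zero_le_one).dist_le_mul (x i) (y i)
  rwa [NNReal.coe_one, one_mul, Subtype.dist_eq] at h

noncomputable def LipV.extend {d l : ℕ} (f : LipV d l) (x : ℝ^d) : ℝ^l :=
  f.1 (cubeRetraction d x)

section LipV

variable {d l : ℕ} (f : LipV d l)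

lemma LipV.lipschitzWith_extend : LipschitzWith 1 (LipV.extend f) := by
  have h := f.2.comp (lipschitzWith_cubeRetraction d)
  rwa [mul_one] at h

lemma LipV.extend_coe (x : unitCube d) : LipV.extend f x = f.1 x := by
  rw [LipV.extend, Subtype.ext (cubeRetraction_of_mem x.2)]

theorem LipV.exists_replace_component (j : Fin l) {ψ : ℝ^d → ℝ^d}
    {H : ℝ^d → ℝ} {η δ : ℝ} (hδ : 0 ≤ δ) (hψ : LipschitzWith 1 ψ)
    (hψη : ∀ x, ‖ψ x - x‖ ≤ η)
    (hψH : ∀ x y, ‖LipV.extend f (ψ x) - LipV.extend f (ψ y)‖ ^ 2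
      - (LipV.extend f (ψ x) j - LipV.extend f (ψ y) j) ^ 2 + (H x - H y) ^ 2 ≤ ‖x - y‖ ^ 2) :
    ∃ g : LipV d l, (∀ x, ‖g.1 x - f.1 x‖ ≤ δ + η) ∧
      ∀ x : unitCube d, |H x - f.1 x j| ≤ δ - η → g.1 x j = H x := by
  set F := fun x => LipV.extend f (ψ x)
  have he : ‖EuclideanSpace.single j (1 : ℝ)‖ = 1 := by simp
  have hF : LipschitzWith 1 F := by
    have h := (LipV.lipschitzWith_extend f).comp hψ
    rwa [mul_one] at h
  obtain ⟨G, hG, hGF, hGH⟩ := exists_lipschitzWith_inner_eq he hF (H := H)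
    (fun x y => by
      simpa [← inner_sub_left, EuclideanSpace.inner_single_one_right, dist_eq_norm] using hψH x y)
    hδ
  have hFf : ∀ x : unitCube d, ‖F x - f.1 x‖ ≤ η := fun x => by
    have h := (LipV.lipschitzWith_extend f).dist_le_mul (ψ x) x
    simp only [NNReal.coe_one, one_mul, dist_eq_norm] at h
    rw [← LipV.extend_coe f x]
    exact h.trans (hψη x)
  have hGf : ∀ x : unitCube d, ‖G x - f.1 x‖ ≤ δ + η := fun x =>
    (norm_sub_le_norm_sub_add_norm_sub _ _ _).trans (add_le_add (hGF x) (hFf x))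
  have hG' : LipschitzWith 1 (G ∘ Subtype.val : unitCube d → _) := by
    simpa using hG.comp (LipschitzWith.subtype_val (unitCube d))
  obtain ⟨g, hg⟩ := f.1.exists_coe_eq_of_norm_sub_le hG'.continuous hGf
  refine ⟨⟨g, hg ▸ hG'⟩, fun x => by simpa [hg] using hGf x, fun x hx => ?_⟩
  simp only [hg, Function.comp_apply]
  have hFf_j : |F x j - f.1 x j| ≤ η := (PiLp.norm_apply_le (F x - f.1 x) j).trans (hFf x)
  rw [← EuclideanSpace.inner_single_one_right]
  refine hGH x ?_
  rw [EuclideanSpace.inner_single_one_right]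
  linarith [abs_sub_le (H x) (f.1 x j) (F x j), abs_sub_comm (F x j) (f.1 x j)]

theorem LipV.exists_apply_eq_on_slab (j : Fin l) {v : ℝ^d} (hv : ‖v‖ = 1)
    {P : ℝ → ℝ} (hP : LipschitzWith 1 P) (a : ℝ) {η δ : ℝ} (hη : 0 ≤ η) (hδ : 0 ≤ δ) :
    ∃ g : LipV d l, (∀ x, ‖g.1 x - f.1 x‖ ≤ δ + η) ∧
      ∀ x : unitCube d, |⟪x.1, v⟫ - a| ≤ η → |P ⟪x.1, v⟫ - f.1 x j| ≤ δ - η →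
        g.1 x j = P ⟪x.1, v⟫ := by
  set φ := fun s => bandClamp η a s - a
  set F := fun x => LipV.extend f (slide v φ x)
  have hφmono : Monotone φ := fun s t h => sub_le_sub_right (bandClamp_monotone η a h) a
  have hφlip : LipschitzWith 1 φ := LipschitzWith.of_dist_le_mul fun s t => by
    simpa [φ, Real.dist_eq] using (lipschitzWith_bandClamp η a).dist_le_mul s t
  have hFH : ∀ x y, ‖F x - F y‖ ^ 2 - (F x j - F y j) ^ 2
      + (P (a + φ ⟪x, v⟫) - P (a + φ ⟪y, v⟫)) ^ 2 ≤ ‖x - y‖ ^ 2 := fun x y => by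
    have hF := (LipV.lipschitzWith_extend f).norm_sub_le (slide v φ x) (slide v φ y)
    have hPφ := hP.norm_sub_le (a + φ ⟪x, v⟫) (a + φ ⟪y, v⟫)
    rw [NNReal.coe_one, one_mul] at hF hPφ
    rw [add_sub_add_left_eq_sub, Real.norm_eq_abs, Real.norm_eq_abs] at hPφ
    nlinarith [norm_slide_sub_slide_sq_add_sq_le hv hφmono hφlip x y, sq_le_sq.mpr hPφ,
      pow_le_pow_left₀ (norm_nonneg _) hF 2, sq_nonneg (F x j - F y j)]
  obtain ⟨g, hgf, hgP⟩ := LipV.exists_replace_component f j hδ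
    (lipschitzWith_slide hv hφmono hφlip)
    (fun x => by rw [norm_slide_sub_self hv]; exact abs_bandClamp_sub_le hη _ _) hFH
  refine ⟨g, hgf, fun x hxa hxP => ?_⟩
  have hx : a + φ ⟪x.1, v⟫ = ⟪x.1, v⟫ := by simp [φ, bandClamp_eq_self hxa]
  have := hgP x (by rwa [hx])
  rwa [hx] at this

end LipV

theorem LipV.exists_apply_eq_of_scalar {d : ℕ} (f : LipV d 1) (j : Fin 1) {v : ℝ^d}
    (hv : ‖v‖ = 1) {P : ℝ → ℝ} (hP : LipschitzWith 1 P) {δ : ℝ} (hδ : 0 ≤ δ) :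
    ∃ g : LipV d 1, (∀ x, ‖g.1 x - f.1 x‖ ≤ δ) ∧
      ∀ x : unitCube d, |P ⟪x.1, v⟫ - f.1 x j| ≤ δ → g.1 x j = P ⟪x.1, v⟫ := by
  have hnorm : ∀ a : ℝ^1, ‖a‖ ^ 2 = a j ^ 2 := fun a => by
    rw [EuclideanSpace.norm_sq_eq, Fin.sum_univ_one, Subsingleton.elim j 0, Real.norm_eq_abs,
      sq_abs]
  have hFH : ∀ x y, ‖LipV.extend f x - LipV.extend f y‖ ^ 2
      - (LipV.extend f x j - LipV.extend f y j) ^ 2 + (P ⟪x, v⟫ - P ⟪y, v⟫) ^ 2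
      ≤ ‖x - y‖ ^ 2 := fun x y => by
    have hPv := hP.norm_sub_le ⟪x, v⟫ ⟪y, v⟫
    rw [NNReal.coe_one, one_mul, ← inner_sub_left, Real.norm_eq_abs, Real.norm_eq_abs] at hPv
    have hCS := abs_real_inner_le_norm (x - y) v
    rw [hv, mul_one] at hCS
    rw [hnorm, PiLp.sub_apply, sub_self, zero_add]
    exact sq_le_sq.mpr (hPv.trans (hCS.trans (le_abs_self _)))
  obtain ⟨g, hgf, hgP⟩ :=
    LipV.exists_replace_component f j (η := 0) hδ LipschitzWith.id (by simp) hFH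
  exact ⟨g, by simpa using hgf, fun x hx => hgP x (by simpa using hx)⟩

lemma eq_lineMap_of_norm_sub_eq_abs {E : Type*} [NormedAddCommGroup E] [NormedSpace ℝ E]
    [StrictConvexSpace ℝ E] {γ : ℝ → E}
    (hiso : ∀ s ∈ Icc (0:ℝ) 1, ∀ t ∈ Icc (0:ℝ) 1, ‖γ s - γ t‖ = |s - t|) {t : ℝ}
    (ht : t ∈ Icc (0:ℝ) 1) : γ t = AffineMap.lineMap (γ 0) (γ 1) t := by
  have h0 : (0:ℝ) ∈ Icc (0:ℝ) 1 := by simp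
  have h1 : (1:ℝ) ∈ Icc (0:ℝ) 1 := by simp
  have h01 : dist (γ 0) (γ 1) = 1 := by simp [dist_eq_norm, hiso 0 h0 1 h1]
  refine eq_lineMap_of_dist_eq_mul_of_dist_eq_mul ?_ ?_
  · rw [h01, dist_eq_norm, hiso 0 h0 t ht, abs_of_nonpos (by linarith [ht.1])]
    ring
  · rw [h01, dist_eq_norm, hiso t ht 1 h1, abs_of_nonpos (by linarith [ht.2])]
    ring

lemma inner_eq_add_of_norm_sub_eq_abs {E : Type*} [NormedAddCommGroup E] [InnerProductSpace ℝ E]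
    {γ : ℝ → E} (hiso : ∀ s ∈ Icc (0:ℝ) 1, ∀ t ∈ Icc (0:ℝ) 1, ‖γ s - γ t‖ = |s - t|) {t : ℝ}
    (ht : t ∈ Icc (0:ℝ) 1) : ⟪γ t, γ 1 - γ 0⟫ = ⟪γ 0, γ 1 - γ 0⟫ + t := by
  have hv : ‖γ 1 - γ 0‖ = 1 := by simpa using hiso 1 (by simp) 0 (by simp)
  rw [eq_lineMap_of_norm_sub_eq_abs hiso ht, AffineMap.lineMap_apply_module', inner_add_left,
    inner_smul_left, real_inner_self_eq_norm_sq, hv]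
  simp [add_comm]

lemma exists_mem_abs_sub_lt_of_dense {P : Set Lip1I} (hP : Dense P) {φ : Icc (0:ℝ) 1 → ℝ}
    (hφ : LipschitzWith 1 φ) {r : ℝ} (hr : 0 < r) : ∃ p ∈ P, ∀ t, |p.1 t - φ t| < r := by
  obtain ⟨p, hpP, hp⟩ := hP.exists_dist_lt ⟨.mkOfCompact ⟨φ, hφ.continuous⟩, hφ⟩ hr
  refine ⟨p, hpP, fun t => ?_⟩
  rw [← Real.dist_eq, dist_comm]
  exact (BoundedContinuousFunction.dist_coe_le_dist t).trans_lt hp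

lemma exists_mem_abs_sub_apply_lt_of_dense {d l : ℕ} {γ : ℝ → ℝ^d}
    (hiso : ∀ s ∈ Icc (0:ℝ) 1, ∀ t ∈ Icc (0:ℝ) 1, ‖γ s - γ t‖ = |s - t|)
    (hγ : ∀ t ∈ Icc (0:ℝ) 1, γ t ∈ unitCube d) {P : Set Lip1I} (hP : Dense P)
    (f : LipV d l) (j : Fin l) {r : ℝ} (hr : 0 < r) :
    ∃ p ∈ P, ∀ t (ht : t ∈ Icc (0:ℝ) 1), |p.1 ⟨t, ht⟩ - f.1 ⟨γ t, hγ t ht⟩ j| < r := by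
  let γc : Icc (0:ℝ) 1 → unitCube d := fun t => ⟨γ t, hγ t t.2⟩
  have hγc : Isometry γc := Isometry.of_dist_eq fun s t => by
    rw [Subtype.dist_eq, Subtype.dist_eq, dist_eq_norm, hiso s s.2 t t.2, Real.dist_eq]
  have hcoord : LipschitzWith 1 fun a : ℝ^l => a j :=
    LipschitzWith.of_dist_le_mul fun a b => by simpa using PiLp.dist_apply_le a b j
  obtain ⟨p, hpP, hp⟩ := exists_mem_abs_sub_lt_of_dense hP (φ := fun t => f.1 (γc t) j)
    ((hcoord.comp (f.2.comp hγc.lipschitz)).weaken (by simp)) hr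
  exact ⟨p, hpP, fun t ht => hp ⟨t, ht⟩⟩

lemma lipschitzWith_iccExtend_sub (p : Lip1I) (c : ℝ) :
    LipschitzWith 1 fun s => IccExtend zero_le_one p.1 (s - c) :=
  (p.2.comp ((LipschitzWith.projIcc zero_le_one).comp
    (IsometryEquiv.subRight c).isometry.lipschitz)).weaken (by simp)

theorem stmt16_general (d l : ℕ) (γ : ℝ → EuclideanSpace ℝ (Fin d))
    (hiso : ∀ s ∈ Set.Icc (0:ℝ) 1, ∀ t ∈ Set.Icc (0:ℝ) 1, ‖γ s - γ t‖ = |s - t|)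
    (hrange : ∀ t, ∀ _ : t ∈ Set.Icc (0:ℝ) 1, γ t ∈ openCube d)
    (P : Set Lip1I) (hP : Dense P) (t₀ : ℝ)
    (f : LipV d l)
    (ε : ℝ) (hε : ε ∈ Set.Ioo (0:ℝ) 1) (j : Fin l) :
    ∃ p ∈ P, ∃ η > 0, ∃ g : LipV d l,
      (∀ x : ↥(unitCube d), ‖g.1 x - f.1 x‖ ≤ ε) ∧
      (∀ t, ∀ ht : t ∈ Set.Icc (0:ℝ) 1, |t - t₀| < η →
        g.1 ⟨γ t, openCube_subset_unitCube d (hrange t ht)⟩ j = p.1 ⟨t, ht⟩) ∧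
      (l = 1 → ∀ t, ∀ ht : t ∈ Set.Icc (0:ℝ) 1,
        g.1 ⟨γ t, openCube_subset_unitCube d (hrange t ht)⟩ j = p.1 ⟨t, ht⟩) := by
  have hε₀ := hε.1
  set v := γ 1 - γ 0
  have hv : ‖v‖ = 1 := by simpa using hiso 1 (by simp) 0 (by simp)
  have hγv : ∀ t ∈ Icc (0:ℝ) 1, ⟪γ t, v⟫ = ⟪γ 0, v⟫ + t := fun t ht =>
    inner_eq_add_of_norm_sub_eq_abs hiso ht
  obtain ⟨p, hpP, hp⟩ := exists_mem_abs_sub_apply_lt_of_dense hiso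
    (fun t ht => openCube_subset_unitCube d (hrange t ht)) hP f j (by linarith : 0 < ε / 4)
  have hpγ : ∀ t (ht : t ∈ Icc (0:ℝ) 1),
      IccExtend zero_le_one p.1 (⟪γ t, v⟫ - ⟪γ 0, v⟫) = p.1 ⟨t, ht⟩ := fun t ht => by
    rw [hγv t ht, add_sub_cancel_left, IccExtend_of_mem _ _ ht]
  by_cases hl : l = 1
  · subst hl
    obtain ⟨g, hgf, hgp⟩ := LipV.exists_apply_eq_of_scalar f j hv
      (lipschitzWith_iccExtend_sub p ⟪γ 0, v⟫) (δ := ε / 4) (by linarith)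
    have hgγ : ∀ t ht, g.1 ⟨γ t, openCube_subset_unitCube d (hrange t ht)⟩ j = p.1 ⟨t, ht⟩ :=
      fun t ht => by
        rw [← hpγ t ht]
        exact hgp _ (by rw [hpγ t ht]; exact (hp t ht).le)
    exact ⟨p, hpP, 1, one_pos, g, fun x => (hgf x).trans (by linarith), fun t ht _ => hgγ t ht,
      fun _ => hgγ⟩
  · obtain ⟨g, hgf, hgp⟩ := LipV.exists_apply_eq_on_slab f j hv
      (lipschitzWith_iccExtend_sub p ⟪γ 0, v⟫) (⟪γ 0, v⟫ + t₀) (η := ε / 4) (δ := ε / 2)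
      (by linarith) (by linarith)
    refine ⟨p, hpP, ε / 4, by linarith, g, fun x => (hgf x).trans (by linarith),
      fun t ht hlt => ?_, fun h => absurd h hl⟩
    rw [← hpγ t ht]
    refine hgp _ (by rw [hγv t ht, add_sub_add_left_eq_sub]; exact hlt.le) ?_
    rw [hpγ t ht]
    linarith [hp t ht]

/-- Density lemma: given a length parameterisation `γ` of a line segment in `(0,1)^d`,
a dense set `𝒫 ⊆ Lip₁([0,1], ℝ)`, `t₀ ∈ (0,1)`, `f ∈ Lip₁([0,1]^d, ℝ^l)` with `Lip f < 1`,
`ε ∈ (0,1)` and `j`, there are `p ∈ 𝒫`, `η > 0` and `g ∈ Lip₁([0,1]^d, ℝ^l)` with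
`‖g - f‖_∞ ≤ ε`, `g_j ∘ γ = p` on `(t₀ - η, t₀ + η)`, and `g₁ ∘ γ = p` on `[0,1]` if
`l = 1`. -/
theorem stmt16 (d l : ℕ) (γ : ℝ → EuclideanSpace ℝ (Fin d))
    (hiso : ∀ s ∈ Set.Icc (0:ℝ) 1, ∀ t ∈ Set.Icc (0:ℝ) 1, ‖γ s - γ t‖ = |s - t|)
    (hrange : ∀ t, ∀ _ : t ∈ Set.Icc (0:ℝ) 1, γ t ∈ openCube d)
    (P : Set Lip1I) (hP : Dense P) (t₀ : ℝ) (ht₀ : t₀ ∈ Set.Ioo (0:ℝ) 1)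
    (f : LipV d l) (K : NNReal) (hK : K < 1) (hfK : LipschitzWith K ⇑f.1)
    (ε : ℝ) (hε : ε ∈ Set.Ioo (0:ℝ) 1) (j : Fin l) :
    ∃ p ∈ P, ∃ η > 0, ∃ g : LipV d l,
      (∀ x : ↥(unitCube d), ‖g.1 x - f.1 x‖ ≤ ε) ∧
      (∀ t, ∀ ht : t ∈ Set.Icc (0:ℝ) 1, |t - t₀| < η →
        g.1 ⟨γ t, openCube_subset_unitCube d (hrange t ht)⟩ j = p.1 ⟨t, ht⟩) ∧
      (l = 1 → ∀ t, ∀ ht : t ∈ Set.Icc (0:ℝ) 1,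
        g.1 ⟨γ t, openCube_subset_unitCube d (hrange t ht)⟩ j = p.1 ⟨t, ht⟩) :=
  stmt16_general d l γ hiso hrange P hP t₀ f ε hε j
end
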